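/- Let φ be a Schur generator with associated outer function ψ and f₀ := −φ̄ψ/ψ̄, and let Γ := Γ_{f₀} be the Hankel operator with symbol f₀. Then for all y, u ∈ H²: ⟨ψy, ψu⟩_{L²} + ⟨P₊(f₀y), P₊(f₀u)⟩_{L²} = ⟨y, u⟩_{L²} − ⟨Γy, Γu⟩_{L²}. In particular, ‖ψy‖² + ‖P₊(f₀y)‖² = ‖y‖² − ‖Γy‖² for every y ∈ H². -/

import Mathlib

open MeasureTheory Complex Filter Finset AddCircle
open scoped Real ENNReal NNReal ComplexConjugate

noncomputable section

instance : Fact (0 < 2 * Real.pi) := ⟨by positivity⟩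

abbrev UC := AddCircle (2 * Real.pi)

abbrev mUC : Measure UC := AddCircle.haarAddCircle

/-- Membership in the Hardy space `H²` of the circle. -/
def MemH2 (f : UC → ℂ) : Prop :=
  MemLp f 2 mUC ∧ ∀ n : ℤ, n < 0 → fourierCoeff f n = 0

/-- Membership in the Hardy space `H^∞` of the circle. -/
def MemHinf (f : UC → ℂ) : Prop :=
  MemLp f ⊤ mUC ∧ ∀ n : ℤ, n < 0 → fourierCoeff f n = 0

/-- Analytic trigonometric polynomials. -/
def AnalyticPoly (p : UC → ℂ) : Prop :=
  ∃ (N : ℕ) (c : ℕ → ℂ), p = fun t => ∑ n ∈ Finset.range N, c n * fourier (n : ℤ) t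

/-- `h ∈ H²` is outer if `h · (analytic polynomials)` is dense in `H²`. -/
def IsOuter (h : UC → ℂ) : Prop :=
  MemH2 h ∧ ∀ f : UC → ℂ, MemH2 f → ∀ ε : ℝ, 0 < ε →
    ∃ p : UC → ℂ, AnalyticPoly p ∧
      eLpNorm (fun t => f t - h t * p t) 2 mUC < ENNReal.ofReal ε

/-- Inner functions: bounded analytic with unimodular boundary values. -/
def IsInnerFn (Θ : UC → ℂ) : Prop :=
  MemHinf Θ ∧ ∀ᵐ t ∂mUC, ‖Θ t‖ = 1

/-- A Schur generator. -/
def SchurGen (φ : UC → ℂ) : Prop :=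
  MemHinf φ ∧ eLpNorm φ ⊤ mUC ≤ 1 ∧
  Integrable (fun t => Real.log (1 - ‖φ t‖)) mUC ∧
  fourierCoeff φ 0 = 0

/-- `ψ` is the outer function associated with `φ`: `|ψ|² = 1 - |φ|²` a.e. and `ψ̂(0) > 0`. -/
def IsAssocOuter (φ ψ : UC → ℂ) : Prop :=
  IsOuter ψ ∧ (∀ᵐ t ∂mUC, ‖ψ t‖ ^ 2 = 1 - ‖φ t‖ ^ 2) ∧
  0 < (fourierCoeff ψ 0).re ∧ (fourierCoeff ψ 0).im = 0

/-- `f₀ := -φ̄ψ/ψ̄`. -/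
def fzero (φ ψ : UC → ℂ) : UC → ℂ := fun t => -(conj (φ t) * ψ t) / conj (ψ t)

/-- Regularity of a Schur generator `φ` (with associated outer function `ψ`). -/
def Regular (φ ψ : UC → ℂ) : Prop :=
  {f : UC → ℂ | MemLp f ⊤ mUC ∧ eLpNorm f ⊤ mUC ≤ 1 ∧
      ∀ n : ℤ, n < 0 → fourierCoeff f n = fourierCoeff (fzero φ ψ) n}
  = {f : UC → ℂ | ∃ E : UC → ℂ, MemHinf E ∧ eLpNorm E ⊤ mUC ≤ 1 ∧
      f =ᵐ[mUC] fun t => fzero φ ψ t + ψ t ^ 2 * E t / (1 - φ t * E t)}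

open scoped Classical in
/-- The Riesz projection `P₊` of an `L²` function, defined (up to a.e. equality) by matching
nonnegative Fourier coefficients. -/
def Pplus (f : UC → ℂ) : UC → ℂ :=
  if h : ∃ g : UC → ℂ, MemLp g 2 mUC ∧ (∀ n : ℤ, n < 0 → fourierCoeff g n = 0) ∧
      ∀ n : ℤ, 0 ≤ n → fourierCoeff g n = fourierCoeff f n
  then h.choose else 0

/-- Membership in `Ȟ_φ`, the closure in `H²(ℂ²)` of `{(ψy, P₊(f₀y)) : y ∈ H²}`. -/
def InHcheck (ψ f₀ : UC → ℂ) (x₁ x₂ : UC → ℂ) : Prop :=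
  MemLp x₁ 2 mUC ∧ MemLp x₂ 2 mUC ∧
  ∀ ε : ℝ, 0 < ε → ∃ y : UC → ℂ, MemH2 y ∧
    eLpNorm (fun t => x₁ t - ψ t * y t) 2 mUC < ENNReal.ofReal ε ∧
    eLpNorm (fun t => x₂ t - Pplus (fun s => f₀ s * y s) t) 2 mUC < ENNReal.ofReal ε

/-- Membership in `Ĥ_φ = H²(ℂ²) ⊖ (φ,ψ)ᵀ H²`. -/
def InHhat (φ ψ : UC → ℂ) (x₁ x₂ : UC → ℂ) : Prop :=
  MemH2 x₁ ∧ MemH2 x₂ ∧ ∀ y : UC → ℂ, MemH2 y →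
    ∫ t, (x₁ t * conj (φ t * y t) + x₂ t * conj (ψ t * y t)) ∂mUC = 0

/-- The Hankel operator `Γ_f = P₋(f ·)` has norm strictly less than `1`. -/
def HankelNormLt1 (f : UC → ℂ) : Prop :=
  ∃ c : ℝ≥0∞, c < 1 ∧ ∀ x : UC → ℂ, MemH2 x →
    eLpNorm (fun t => f t * x t - Pplus (fun s => f s * x s) t) 2 mUC ≤ c * eLpNorm x 2 mUC

/-- Strong regularity: regular and `‖Γ_{f₀}‖ < 1`. -/
def StronglyRegular (φ ψ : UC → ℂ) : Prop :=
  Regular φ ψ ∧ HankelNormLt1 (fzero φ ψ)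

/-- The arc of the circle of length `ℓ` starting at `a`. -/
def arc (a ℓ : ℝ) : Set UC := (fun x : ℝ => (x : UC)) '' Set.Ioo a (a + ℓ)

/-- Muckenhoupt `A₂` condition for a scalar weight on the circle. -/
def IsA2 (w : UC → ℝ) : Prop :=
  ∃ C : ℝ≥0, ∀ a ℓ : ℝ, 0 < ℓ → ℓ ≤ 2 * Real.pi →
    (∫⁻ t in arc a ℓ, ENNReal.ofReal (w t) ∂mUC) *
      (∫⁻ t in arc a ℓ, (ENNReal.ofReal (w t))⁻¹ ∂mUC) ≤
      (C : ℝ≥0∞) * ENNReal.ofReal (ℓ / (2 * Real.pi)) ^ 2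

/-- Normalized average of a function over an arc. -/
def avgArc (F : UC → ℂ) (a ℓ : ℝ) : ℂ :=
  ((ℓ / (2 * Real.pi) : ℝ) : ℂ)⁻¹ * ∫ t in arc a ℓ, F t ∂mUC

/-- The matrix weight `W = [[1, φ], [φ̄, 1]]`. -/
def Wmat (φ : UC → ℂ) (t : UC) : Matrix (Fin 2) (Fin 2) ℂ := !![1, φ t; conj (φ t), 1]

/-- Its pointwise inverse `W⁻¹ = (1-|φ|²)⁻¹ [[1, -φ], [-φ̄, 1]]`. -/
def WmatInv (φ : UC → ℂ) (t : UC) : Matrix (Fin 2) (Fin 2) ℂ :=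
  (((1 - ‖φ t‖ ^ 2 : ℝ) : ℂ))⁻¹ • !![1, -φ t; -conj (φ t), 1]

/-- Entrywise normalized average of a matrix-valued function over an arc. -/
def avgMat (F : UC → Matrix (Fin 2) (Fin 2) ℂ) (a ℓ : ℝ) : Matrix (Fin 2) (Fin 2) ℂ :=
  Matrix.of fun i j => avgArc (fun t => F t i j) a ℓ

/-- The matrix `A₂` condition for `W = [[1, φ], [φ̄, 1]]`: the entries of `W` and `W⁻¹` are
integrable and `sup_I ‖⟨W⟩_I^{1/2} ⟨W⁻¹⟩_I^{1/2}‖ < ∞`; since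
`‖⟨W⟩^{1/2}⟨W⁻¹⟩^{1/2}‖² ≤ tr(⟨W⟩⟨W⁻¹⟩) ≤ 2‖⟨W⟩^{1/2}⟨W⁻¹⟩^{1/2}‖²`, this is expressed via
uniform boundedness of the trace of the product of the averages. -/
def MatrixA2 (φ : UC → ℂ) : Prop :=
  Integrable (fun t => (1 - ‖φ t‖ ^ 2)⁻¹) mUC ∧
  ∃ C : ℝ, ∀ a ℓ : ℝ, 0 < ℓ → ℓ ≤ 2 * Real.pi →
    (Matrix.trace (avgMat (Wmat φ) a ℓ * avgMat (WmatInv φ) a ℓ)).re ≤ C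

/-- The Toeplitz operator `T_v : H² → H²` is invertible (i.e. bijective on `H²`,
up to a.e. equality; its inverse is then automatically bounded). -/
def ToeplitzInvertible (v : UC → ℂ) : Prop :=
  (∀ x : UC → ℂ, MemH2 x →
      Pplus (fun t => v t * x t) =ᵐ[mUC] (fun _ => (0 : ℂ)) → x =ᵐ[mUC] (fun _ => (0 : ℂ))) ∧
  ∀ z : UC → ℂ, MemH2 z → ∃ x : UC → ℂ, MemH2 x ∧ Pplus (fun t => v t * x t) =ᵐ[mUC] z

/-!
Because `ψ ≠ 0` a.e., `|f₀| = |φ|` and hence `|ψ|² + |f₀|² = 1` a.e., so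
`⟨ψy, ψu⟩ + ⟨f₀y, f₀u⟩ = ⟨y, u⟩` pointwise under the integral. Writing `f₀y = P₊(f₀y) + Γy`,
the two pieces have Fourier coefficients supported in `n ≥ 0` and `n < 0` respectively, so they
are orthogonal by Parseval, and `⟨f₀y, f₀u⟩ = ⟨P₊(f₀y), P₊(f₀u)⟩ + ⟨Γy, Γu⟩`.
-/

section MeasureSpace

variable {α : Type*} [MeasurableSpace α] {μ : Measure α}

lemma MeasureTheory.MemLp.mul_of_ae_norm_le_one {𝕜 : Type*} [NormedRing 𝕜] {p : ℝ≥0∞}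
    {a g : α → 𝕜} (ha : AEStronglyMeasurable a μ) (ha1 : ∀ᵐ t ∂μ, ‖a t‖ ≤ 1) (hg : MemLp g p μ) :
    MemLp (fun t => a t * g t) p μ :=
  hg.of_le_mul (c := 1) (ha.mul hg.aestronglyMeasurable) <| ha1.mono fun _ ht =>
    (norm_mul_le _ _).trans (mul_le_mul_of_nonneg_right ht (norm_nonneg _))

lemma integrable_mul_conj {f g : α → ℂ} (hf : MemLp f 2 μ) (hg : MemLp g 2 μ) :
    Integrable (fun t => f t * conj (g t)) μ :=
  hf.integrable_mul (q := 2) hg.star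

lemma integral_mul_conj_self (f : α → ℂ) :
    ∫ t, f t * conj (f t) ∂μ = ((∫ t, ‖f t‖ ^ 2 ∂μ : ℝ) : ℂ) := by
  rw [← integral_complex_ofReal]
  congr 1 with t
  rw [Complex.mul_conj', Complex.ofReal_pow]

lemma integral_add_mul_conj_add {p r q s : α → ℂ} (hp : MemLp p 2 μ) (hr : MemLp r 2 μ)
    (hq : MemLp q 2 μ) (hs : MemLp s 2 μ) :
    ∫ t, (p t + r t) * conj (q t + s t) ∂μ =
      ∫ t, p t * conj (q t) ∂μ + ∫ t, p t * conj (s t) ∂μ +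
        ∫ t, r t * conj (q t) ∂μ + ∫ t, r t * conj (s t) ∂μ := by
  simp_rw [map_add, add_mul, mul_add]
  rw [integral_add, integral_add, integral_add, ← add_assoc]
  all_goals first
    | exact integrable_mul_conj ‹_› ‹_›
    | exact (integrable_mul_conj ‹_› ‹_›).add (integrable_mul_conj ‹_› ‹_›)

lemma norm_le_one_of_norm_sq_add_norm_sq_eq_one {a b : ℂ} (h : ‖a‖ ^ 2 + ‖b‖ ^ 2 = 1) :
    ‖a‖ ≤ 1 := by
  nlinarith [norm_nonneg a, sq_nonneg ‖b‖]

lemma integral_mul_conj_add_mul_conj_of_norm_sq_add {a b y u : α → ℂ}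
    (ha : AEStronglyMeasurable a μ) (hb : AEStronglyMeasurable b μ)
    (hab : ∀ᵐ t ∂μ, ‖a t‖ ^ 2 + ‖b t‖ ^ 2 = 1) (hy : MemLp y 2 μ) (hu : MemLp u 2 μ) :
    ∫ t, a t * y t * conj (a t * u t) ∂μ + ∫ t, b t * y t * conj (b t * u t) ∂μ =
      ∫ t, y t * conj (u t) ∂μ := by
  have ha1 : ∀ᵐ t ∂μ, ‖a t‖ ≤ 1 := hab.mono fun _ => norm_le_one_of_norm_sq_add_norm_sq_eq_one
  have hb1 : ∀ᵐ t ∂μ, ‖b t‖ ≤ 1 :=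
    hab.mono fun _ h => norm_le_one_of_norm_sq_add_norm_sq_eq_one ((add_comm _ _).trans h)
  rw [← integral_add
    (integrable_mul_conj (hy.mul_of_ae_norm_le_one ha ha1) (hu.mul_of_ae_norm_le_one ha ha1))
    (integrable_mul_conj (hy.mul_of_ae_norm_le_one hb hb1) (hu.mul_of_ae_norm_le_one hb hb1))]
  refine integral_congr_ae (hab.mono fun t h => ?_)
  calc a t * y t * conj (a t * u t) + b t * y t * conj (b t * u t)
      = (a t * conj (a t) + b t * conj (b t)) * (y t * conj (u t)) := by
        simp only [map_mul]; ring
    _ = y t * conj (u t) := by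
        rw [Complex.mul_conj', Complex.mul_conj', ← Complex.ofReal_pow, ← Complex.ofReal_pow,
          ← Complex.ofReal_add, h, Complex.ofReal_one, one_mul]

lemma measure_setOf_eq_zero_rpow_le_eLpNorm_one_sub_mul {ψ g : α → ℂ} {p : ℝ≥0∞}
    (hψ : AEStronglyMeasurable ψ μ) (hp0 : p ≠ 0) (hp : p ≠ ∞) :
    μ {t | ψ t = 0} ^ (1 / p.toReal) ≤ eLpNorm (fun t => 1 - ψ t * g t) p μ :=
  calc μ {t | ψ t = 0} ^ (1 / p.toReal)
      = eLpNorm ({t | ψ t = 0}.indicator fun _ => (1 : ℂ)) p μ := by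
        rw [eLpNorm_indicator_const₀ (hψ.nullMeasurableSet_eq_fun aestronglyMeasurable_const)
          hp0 hp, enorm_one, one_mul]
    _ = eLpNorm ({t | ψ t = 0}.indicator fun t => 1 - ψ t * g t) p μ := by
        congr 1
        exact Set.indicator_congr fun t (ht : ψ t = 0) => by rw [ht, zero_mul, sub_zero]
    _ ≤ eLpNorm (fun t => 1 - ψ t * g t) p μ := eLpNorm_indicator_le _

end MeasureSpace

section Fourier

variable {T : ℝ} [Fact (0 < T)]

lemma fourierCoeff.sub {E : Type*} [NormedAddCommGroup E] [NormedSpace ℂ E]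
    {f g : AddCircle T → E} (hf : Integrable f haarAddCircle) (hg : Integrable g haarAddCircle)
    (n : ℤ) : fourierCoeff (fun t => f t - g t) n = fourierCoeff f n - fourierCoeff g n := by
  simpa [fourierCoeff, smul_sub] using integral_sub (hf.fourier_smul (-n)) (hg.fourier_smul (-n))

lemma fourierBasis_repr_toLp {f : AddCircle T → ℂ} (hf : MemLp f 2 haarAddCircle) (n : ℤ) :
    fourierBasis.repr (hf.toLp f) n = fourierCoeff f n := by
  rw [fourierBasis_repr, fourierCoeff_congr_ae hf.coeFn_toLp]

lemma hasSum_fourierCoeff_mul_conj {f g : AddCircle T → ℂ} (hf : MemLp f 2 haarAddCircle)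
    (hg : MemLp g 2 haarAddCircle) :
    HasSum (fun n => fourierCoeff f n * conj (fourierCoeff g n))
      (∫ t, f t * conj (g t) ∂haarAddCircle) := by
  have hterm : ∀ n, inner ℂ (hg.toLp g) (fourierBasis n) * inner ℂ (fourierBasis n) (hf.toLp f)
      = fourierCoeff f n * conj (fourierCoeff g n) := fun n => by
    rw [← inner_conj_symm, ← fourierBasis.repr_apply_apply, ← fourierBasis.repr_apply_apply,
      fourierBasis_repr_toLp, fourierBasis_repr_toLp, mul_comm]
  have hinner : inner ℂ (hg.toLp g) (hf.toLp f) = ∫ t, f t * conj (g t) ∂haarAddCircle := by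
    rw [L2.inner_def]
    refine integral_congr_ae ?_
    filter_upwards [hf.coeFn_toLp, hg.coeFn_toLp] with t hft hgt
    rw [hft, hgt, RCLike.inner_apply, mul_comm]
  simpa only [hterm, hinner] using fourierBasis.hasSum_inner_mul_inner (hg.toLp g) (hf.toLp f)

lemma integral_mul_conj_eq_zero_of_fourierCoeff {f g : AddCircle T → ℂ}
    (hf : MemLp f 2 haarAddCircle) (hg : MemLp g 2 haarAddCircle)
    (h : ∀ n, fourierCoeff f n = 0 ∨ fourierCoeff g n = 0) :
    ∫ t, f t * conj (g t) ∂haarAddCircle = 0 :=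
  (hasSum_fourierCoeff_mul_conj hf hg).unique <| by
    convert hasSum_zero with n
    rcases h n with h | h <;> simp [h]

lemma exists_memLp_fourierCoeff_eq_indicator {f : AddCircle T → ℂ}
    (hf : MemLp f 2 haarAddCircle) (s : Set ℤ) :
    ∃ g : AddCircle T → ℂ, MemLp g 2 haarAddCircle ∧
      ∀ n, fourierCoeff g n = s.indicator (fourierCoeff f) n := by
  set c : lp (fun _ : ℤ => ℂ) 2 := fourierBasis.repr (hf.toLp f)
  have hc : Memℓp (s.indicator c) 2 :=
    (lp.memℓp c).mono' fun n => norm_indicator_le_norm_self _ _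
  refine ⟨fourierBasis.repr.symm ⟨_, hc⟩, Lp.memLp _, fun n => ?_⟩
  rw [← fourierBasis_repr, LinearIsometryEquiv.apply_symm_apply]
  change s.indicator c n = _
  rw [show ⇑c = fourierCoeff f from funext (fourierBasis_repr_toLp hf)]

end Fourier

lemma Pplus_spec {F : UC → ℂ} (hF : MemLp F 2 mUC) :
    MemLp (Pplus F) 2 mUC ∧ (∀ n : ℤ, n < 0 → fourierCoeff (Pplus F) n = 0) ∧
      ∀ n : ℤ, 0 ≤ n → fourierCoeff (Pplus F) n = fourierCoeff F n := by
  have hex : ∃ g : UC → ℂ, MemLp g 2 mUC ∧ (∀ n : ℤ, n < 0 → fourierCoeff g n = 0) ∧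
      ∀ n : ℤ, 0 ≤ n → fourierCoeff g n = fourierCoeff F n := by
    obtain ⟨g, hg, hcoeff⟩ := exists_memLp_fourierCoeff_eq_indicator hF (Set.Ici 0)
    exact ⟨g, hg, fun n hn => by simp [hcoeff, hn], fun n hn => by simp [hcoeff, hn]⟩
  rw [Pplus, dif_pos hex]
  exact hex.choose_spec

lemma fourierCoeff_sub_Pplus_of_nonneg {F : UC → ℂ} (hF : MemLp F 2 mUC) {n : ℤ} (hn : 0 ≤ n) :
    fourierCoeff (fun t => F t - Pplus F t) n = 0 := by
  obtain ⟨hPF, -, hPF_nonneg⟩ := Pplus_spec hF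
  rw [fourierCoeff.sub (hF.integrable one_le_two) (hPF.integrable one_le_two), hPF_nonneg n hn,
    sub_self]

lemma integral_mul_conj_split_Pplus {F G : UC → ℂ} (hF : MemLp F 2 mUC) (hG : MemLp G 2 mUC) :
    ∫ t, F t * conj (G t) ∂mUC =
      ∫ t, Pplus F t * conj (Pplus G t) ∂mUC +
        ∫ t, (F t - Pplus F t) * conj (G t - Pplus G t) ∂mUC := by
  obtain ⟨hPF, hPF_neg, -⟩ := Pplus_spec hF
  obtain ⟨hPG, hPG_neg, -⟩ := Pplus_spec hG
  have hRF : MemLp (fun t => F t - Pplus F t) 2 mUC := hF.sub hPF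
  have hRG : MemLp (fun t => G t - Pplus G t) 2 mUC := hG.sub hPG
  have hcross₁ : ∫ t, Pplus F t * conj (G t - Pplus G t) ∂mUC = 0 :=
    integral_mul_conj_eq_zero_of_fourierCoeff hPF hRG fun n =>
      (lt_or_ge n 0).imp (hPF_neg n) (fourierCoeff_sub_Pplus_of_nonneg hG)
  have hcross₂ : ∫ t, (F t - Pplus F t) * conj (Pplus G t) ∂mUC = 0 :=
    integral_mul_conj_eq_zero_of_fourierCoeff hRF hPG fun n =>
      (lt_or_ge n 0).symm.imp (fourierCoeff_sub_Pplus_of_nonneg hF) (hPG_neg n)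
  calc ∫ t, F t * conj (G t) ∂mUC
      = ∫ t, (Pplus F t + (F t - Pplus F t)) * conj (Pplus G t + (G t - Pplus G t)) ∂mUC := by
        simp only [add_sub_cancel]
    _ = _ := by rw [integral_add_mul_conj_add hPF hRF hPG hRG, hcross₁, hcross₂, add_zero, add_zero]

lemma memH2_one : MemH2 fun _ => 1 := by
  refine ⟨memLp_const 1, fun n hn => ?_⟩
  have h1 : (fun _ : UC => (1 : ℂ)) = fourier 0 := funext fun _ => fourier_zero.symm
  rw [h1, fourierCoeff_fourier, Pi.single_eq_of_ne hn.ne]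

lemma IsOuter.ae_ne_zero {ψ : UC → ℂ} (h : IsOuter ψ) : ∀ᵐ t ∂mUC, ψ t ≠ 0 := by
  obtain ⟨⟨hψ, -⟩, hdense⟩ := h
  -- on `{ψ = 0}` every `ψ p` vanishes, so `‖1 - ψ p‖₂² ≥ m {ψ = 0}` cannot be made small
  have hsmall : ∀ ε : ℝ≥0, 0 < ε → mUC {t | ψ t = 0} ^ (1 / (2 : ℝ≥0∞).toReal) ≤ ε := by
    intro ε hε
    obtain ⟨p, -, hp⟩ := hdense _ memH2_one ε hε
    rw [← ENNReal.ofReal_coe_nnreal]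
    exact ((measure_setOf_eq_zero_rpow_le_eLpNorm_one_sub_mul hψ.aestronglyMeasurable
      two_ne_zero ENNReal.ofNat_ne_top).trans_lt hp).le
  have hzero : mUC {t | ψ t = 0} ^ (1 / (2 : ℝ≥0∞).toReal) ≤ 0 :=
    ENNReal.le_of_forall_pos_le_add fun ε hε _ => by rw [zero_add]; exact hsmall ε hε
  simpa [ae_iff, ENNReal.rpow_eq_zero_iff] using hzero

lemma norm_fzero_apply {φ ψ : UC → ℂ} {t : UC} (ht : ψ t ≠ 0) : ‖fzero φ ψ t‖ = ‖φ t‖ := by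
  have : ‖ψ t‖ ≠ 0 := norm_ne_zero_iff.mpr ht
  simp only [fzero, norm_div, norm_neg, norm_mul, Complex.norm_conj]
  field_simp

lemma aestronglyMeasurable_fzero {μ : Measure UC} {φ ψ : UC → ℂ}
    (hφ : AEStronglyMeasurable φ μ) (hψ : AEStronglyMeasurable ψ μ) :
    AEStronglyMeasurable (fzero φ ψ) μ := by
  refine AEMeasurable.aestronglyMeasurable ?_
  have := hφ.aemeasurable
  have := hψ.aemeasurable
  unfold fzero
  fun_prop

lemma IsAssocOuter.norm_sq_add_norm_fzero_sq {φ ψ : UC → ℂ} (h : IsAssocOuter φ ψ) :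
    ∀ᵐ t ∂mUC, ‖ψ t‖ ^ 2 + ‖fzero φ ψ t‖ ^ 2 = 1 := by
  filter_upwards [h.1.ae_ne_zero, h.2.1] with t hne hmod
  rw [norm_fzero_apply hne, hmod, sub_add_cancel]

/-- The model-space identity
`⟨ψy, ψu⟩ + ⟨P₊(f₀y), P₊(f₀u)⟩ = ⟨y, u⟩ - ⟨Γy, Γu⟩`, and in particular
`‖ψy‖² + ‖P₊(f₀y)‖² = ‖y‖² - ‖Γy‖²`. -/
theorem model_space_identity (φ ψ : UC → ℂ)
    (hφ : SchurGen φ) (hψ : IsAssocOuter φ ψ) :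
    (∀ y u : UC → ℂ, MemH2 y → MemH2 u →
      ((∫ t, ψ t * y t * conj (ψ t * u t) ∂mUC) +
        ∫ t, Pplus (fun s => fzero φ ψ s * y s) t *
          conj (Pplus (fun s => fzero φ ψ s * u s) t) ∂mUC) =
      (∫ t, y t * conj (u t) ∂mUC) -
        ∫ t, (fzero φ ψ t * y t - Pplus (fun s => fzero φ ψ s * y s) t) *
          conj (fzero φ ψ t * u t - Pplus (fun s => fzero φ ψ s * u s) t) ∂mUC) ∧
    ∀ y : UC → ℂ, MemH2 y →
      ((∫ t, ‖ψ t * y t‖ ^ 2 ∂mUC) +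
        ∫ t, ‖Pplus (fun s => fzero φ ψ s * y s) t‖ ^ 2 ∂mUC) =
      (∫ t, ‖y t‖ ^ 2 ∂mUC) -
        ∫ t, ‖fzero φ ψ t * y t - Pplus (fun s => fzero φ ψ s * y s) t‖ ^ 2 ∂mUC := by
  have hψ_meas : AEStronglyMeasurable ψ mUC := hψ.1.1.1.aestronglyMeasurable
  have hf₀_meas : AEStronglyMeasurable (fzero φ ψ) mUC :=
    aestronglyMeasurable_fzero hφ.1.1.aestronglyMeasurable hψ_meas
  have hpyth := hψ.norm_sq_add_norm_fzero_sq
  have hf₀_le : ∀ᵐ t ∂mUC, ‖fzero φ ψ t‖ ≤ 1 :=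
    hpyth.mono fun _ h => norm_le_one_of_norm_sq_add_norm_sq_eq_one ((add_comm _ _).trans h)
  refine (fun hinner => ⟨hinner, fun y hy => ?norms⟩) fun y u hy hu => ?inner
  case inner =>
    linear_combination
      integral_mul_conj_add_mul_conj_of_norm_sq_add hψ_meas hf₀_meas hpyth hy.1 hu.1 -
        integral_mul_conj_split_Pplus (hy.1.mul_of_ae_norm_le_one hf₀_meas hf₀_le)
          (hu.1.mul_of_ae_norm_le_one hf₀_meas hf₀_le)
  case norms =>
    have h := hinner y y hy hy
    simp only [integral_mul_conj_self] at h
    exact_mod_cast h
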